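/- arXiv:2209.11192 — 2 statements merged into one kernel-verified Lean document; each statement's English description precedes it below -/
import Mathlib

section
/- Let M ≥ 1, W = exp(−2πi/M), and let H : Fin M → ℂ[X] be polynomials (in z⁻¹, i.e., evaluate at z⁻¹). Suppose the alias matrix 𝓗(z) with entries H k (z W^q) is invertible for some z ≠ 0. Then the matrix functions A_{i,j} defined by A_{i,j}(z^M) = det(𝓗(z) with row j replaced by the row q ↦ (z W^q)^{−(d+i)}) / det 𝓗(z) do not depend on the choice of M-th root: replacing z by z W^r for any r : Fin M leaves A_{i,j}(z^M) unchanged. -/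
open Complex in
theorem stmt_12 (M : ℕ) (hM : 1 ≤ M) (H : Fin M → Polynomial ℂ) (d i : ℕ) (j : Fin M)
    (z : ℂ) (hz : z ≠ 0) :
    let W : ℂ := Complex.exp (-(2 * Real.pi * I) / M)
    let 𝓗 : ℂ → Matrix (Fin M) (Fin M) ℂ :=
      fun w k q => (H k).eval ((w * W ^ (q : ℕ))⁻¹)
    let N : ℂ → ℂ := fun w =>
      ((𝓗 w).updateRow j (fun q => (w * W ^ (q : ℕ)) ^ (-((d : ℤ) + (i : ℤ))))).det
    (𝓗 z).det ≠ 0 →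
      ∀ r : Fin M,
        (𝓗 (z * W ^ (r : ℕ))).det ≠ 0 ∧
          N (z * W ^ (r : ℕ)) / (𝓗 (z * W ^ (r : ℕ))).det = N z / (𝓗 z).det := by
  intro W 𝓗 N hdet r
  have hMC : (M : ℂ) ≠ 0 := Nat.cast_ne_zero.mpr (by omega)
  have hWM : W ^ M = 1 := by
    rw [show W = Complex.exp (-(2 * Real.pi * I) / M) from rfl, ← Complex.exp_nat_mul]
    rw [mul_div_cancel₀ _ hMC]
    rw [show -(2 * Real.pi * I) = -(2 * Real.pi) * I by ring]
    simpa using Complex.exp_int_mul_two_pi_mul_I (-1)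
  have hpowmod : ∀ a : ℕ, W ^ (a % M) = W ^ a := by
    intro a
    conv_rhs => rw [← Nat.div_add_mod a M]
    rw [pow_add, pow_mul, hWM, one_pow, one_mul]
  haveI : NeZero M := ⟨by omega⟩
  set σ : Equiv.Perm (Fin M) := Equiv.addRight r with hσ
  have key : ∀ q : Fin M, z * W ^ (r : ℕ) * W ^ (q : ℕ) = z * W ^ ((σ q : Fin M) : ℕ) := by
    intro q
    have : ((σ q : Fin M) : ℕ) = ((q : ℕ) + (r : ℕ)) % M := by
      simp [hσ, Equiv.addRight, Fin.add_def]
    rw [this, hpowmod, pow_add]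
    ring
  have hH : 𝓗 (z * W ^ (r : ℕ)) = (𝓗 z).submatrix id σ := by
    ext k q
    simp only [Matrix.submatrix_apply, id]
    show (H k).eval _ = (H k).eval _
    rw [key q]
  have hrow : (fun q : Fin M => (z * W ^ (r : ℕ) * W ^ (q : ℕ)) ^ (-((d : ℤ) + (i : ℤ))))
      = (fun q : Fin M => (z * W ^ (q : ℕ)) ^ (-((d : ℤ) + (i : ℤ)))) ∘ σ := by
    funext q
    simp only [Function.comp]
    rw [key q]
  have hNsub : (𝓗 (z * W ^ (r : ℕ))).updateRow j
      (fun q => (z * W ^ (r : ℕ) * W ^ (q : ℕ)) ^ (-((d : ℤ) + (i : ℤ))))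
      = ((𝓗 z).updateRow j (fun q => (z * W ^ (q : ℕ)) ^ (-((d : ℤ) + (i : ℤ))))).submatrix id σ := by
    ext k q
    by_cases hk : k = j
    · subst hk
      simp only [Matrix.updateRow_self, Matrix.submatrix_apply, id_eq, Matrix.updateRow_self]
      rw [key q]
    · simp only [Matrix.updateRow_ne hk, Matrix.submatrix_apply, id_eq, Matrix.updateRow_ne hk, hH,
        Matrix.submatrix_apply, id_eq]
  have hsign : ((Equiv.Perm.sign σ : ℤ) : ℂ) ≠ 0 := by
    rcases Int.units_eq_one_or (Equiv.Perm.sign σ) with h | h <;> simp [h]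
  have hDet : (𝓗 (z * W ^ (r : ℕ))).det = ((Equiv.Perm.sign σ : ℤ) : ℂ) * (𝓗 z).det := by
    rw [hH, Matrix.det_permute']
  have hN : N (z * W ^ (r : ℕ)) = ((Equiv.Perm.sign σ : ℤ) : ℂ) * N z := by
    show ((𝓗 (z * W ^ (r : ℕ))).updateRow j _).det = _
    rw [hNsub, Matrix.det_permute']
  refine ⟨by rw [hDet]; exact mul_ne_zero hsign hdet, ?_⟩
  rw [hDet, hN, mul_div_mul_left _ _ hsign]
end

section
/- Let Q < M, let a, b : Fin Q → Fin M → ℂ and let s, s' : Fin M → ℂ be two distinct weight functions. Define S(s) i j = (1/M) ∑_q a i q * b j q * s q. Then in general det S(s)/det S(s') depends on s and s' (exhibit: M = 2, Q = 1, a 0 = b 0 = (1,1), s = (1,0), s' = (0,1) give det S(s) = det S(s') = 1/2 but a 0 = b 0 = (1,0) gives 1/2 vs 0); whereas when Q = M, det S(s) = (1/M^M)(∏_q s q) det a * det b, so the ratio det S(s) with one row of a replaced, over det S(s), is independent of s. -/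
lemma key (M : ℕ) (a b : Fin M → Fin M → ℂ) (s : Fin M → ℂ) :
    Matrix.det (fun i j => (1 / (M : ℂ)) * ∑ q : Fin M, a i q * b j q * s q) =
      (1 / (M : ℂ) ^ M) * (∏ q : Fin M, s q) * Matrix.det a * Matrix.det b := by
  have h : (fun i j => (1 / (M : ℂ)) * ∑ q : Fin M, a i q * b j q * s q) =
      (1 / (M : ℂ)) • (Matrix.of a * Matrix.diagonal s * Matrix.transpose (Matrix.of b)) := by
    ext i j
    simp [Matrix.mul_apply, Matrix.diagonal, Finset.mul_sum]
    congr 1; ext q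
    ring
  rw [h, Matrix.det_smul, Matrix.det_mul, Matrix.det_mul, Matrix.det_diagonal,
    Matrix.det_transpose]
  rw [show Matrix.of a = a from rfl, show Matrix.of b = b from rfl]
  simp
  ring

theorem stmt_15 :
    -- For Q < M the determinant depends on the weights: counterexample with M = 2, Q = 1.
    (let f : (Fin 2 → ℂ) → (Fin 2 → ℂ) → (Fin 2 → ℂ) → ℂ :=
      fun a b s => (1 / (2 : ℂ)) * ∑ q : Fin 2, a q * b q * s q
    f ![1, 1] ![1, 1] ![1, 0] = 1 / 2 ∧ f ![1, 1] ![1, 1] ![0, 1] = 1 / 2 ∧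
      f ![1, 0] ![1, 0] ![1, 0] = 1 / 2 ∧ f ![1, 0] ![1, 0] ![0, 1] = 0) ∧
    -- In the maximally decimated case Q = M the determinant factors,
    (∀ (M : ℕ), 0 < M → ∀ (a b : Fin M → Fin M → ℂ) (s : Fin M → ℂ),
      Matrix.det (fun i j => (1 / (M : ℂ)) * ∑ q : Fin M, a i q * b j q * s q) =
        (1 / (M : ℂ) ^ M) * (∏ q : Fin M, s q) * Matrix.det a * Matrix.det b) ∧
    -- hence the ratio of determinants (with one factor `a` replaced by `a'`)
    -- is independent of the weight function `s`.
    (∀ (M : ℕ), 0 < M → ∀ (a a' b : Fin M → Fin M → ℂ) (s s' : Fin M → ℂ),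
      Matrix.det a ≠ 0 → Matrix.det b ≠ 0 →
      (∏ q : Fin M, s q) ≠ 0 → (∏ q : Fin M, s' q) ≠ 0 →
      Matrix.det (fun i j => (1 / (M : ℂ)) * ∑ q : Fin M, a' i q * b j q * s q) /
          Matrix.det (fun i j => (1 / (M : ℂ)) * ∑ q : Fin M, a i q * b j q * s q) =
        Matrix.det (fun i j => (1 / (M : ℂ)) * ∑ q : Fin M, a' i q * b j q * s' q) /
          Matrix.det (fun i j => (1 / (M : ℂ)) * ∑ q : Fin M, a i q * b j q * s' q)) := by
  refine ⟨⟨?_, ?_, ?_, ?_⟩, fun M _ a b s => key M a b s, ?_⟩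
  · simp [Fin.sum_univ_two]
  · simp [Fin.sum_univ_two]
  · simp [Fin.sum_univ_two]
  · simp [Fin.sum_univ_two]
  · intro M hM a a' b s s' ha hb hs hs'
    have hM0 : (M : ℂ) ≠ 0 := Nat.cast_ne_zero.mpr hM.ne'
    rw [key, key, key, key]
    field_simp
end
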